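/- arXiv:1712.06365 — 3 statements merged into one kernel-verified Lean document; each statement's English description precedes it below -/
import Mathlib

section
/- Let Z be an unriggable event with I_{¬Z} = 1 − I_Z, and let R be a reward function and c a constant. For any history h_t with I_{¬Z}(h_t) > 0, and any policies π, π': V(cI_Z + R·I_{¬Z}, π, h_t) ≥ V(cI_Z + R·I_{¬Z}, π', h_t) if and only if V_{¬Z}(R, π, h_t) ≥ V_{¬Z}(R, π', h_t), where V_{¬Z}(R, π, h_t) = [Σ_{h_n} R(h_n) I_{¬Z}(h_n) μ(h_n | h_t, π)] / I_{¬Z}(h_t). Consequently, a policy maximizing the standard expected reward cI_Z + R·I_{¬Z} is exactly a policy maximizing the conditional expected reward of R given ¬Z. -/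
/-!
Unriggability makes the `c · I_Z` part of the reward contribute the same constant `c · I_Z(h_t)`
to the value of every policy, so the standard value of `c I_Z + R I_{¬Z}` is that constant plus
the unnormalised conditional value `Σ R I_{¬Z} μ`. Dividing by the positive, policy-independent
normaliser `I_{¬Z}(h_t)` preserves the order, hence the two values rank policies identically.
-/

theorem Finset.sum_mul_const_mul_add_mul_one_sub {ι R : Type*} [CommRing R] (s : Finset ι)
    (w I f : ι → R) (c : R) :
    ∑ i ∈ s, w i * (c * I i + f i * (1 - I i)) =
      c * ∑ i ∈ s, w i * I i + ∑ i ∈ s, f i * (1 - I i) * w i := by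
  rw [Finset.mul_sum, ← Finset.sum_add_distrib]
  exact Finset.sum_congr rfl fun i _ => by ring

section Ranking

variable {ι K : Type*} [Field K] [LinearOrder K] [IsStrictOrderedRing K]
  {V N : ι → K} {a d : K}

theorem le_iff_div_le_div_of_eq_const_add (hd : 0 < d) (hV : ∀ i, V i = a + N i) (i j : ι) :
    V j ≤ V i ↔ N j / d ≤ N i / d := by
  rw [hV, hV, add_le_add_iff_left, div_le_div_iff_of_pos_right hd]

theorem forall_le_iff_forall_div_le_div_of_eq_const_add (hd : 0 < d) (hV : ∀ i, V i = a + N i) (m : ι) :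
    (∀ i, V i ≤ V m) ↔ ∀ i, N i / d ≤ N m / d :=
  forall_congr' (le_iff_div_le_div_of_eq_const_add hd hV m)

end Ranking

/-- Effective disbelief. For unriggable `Z` (expectation `IZh` at
`h_t` policy-independent) with `I_{¬Z}(h_t) = 1 - IZh > 0`, comparing two
policies by the standard value of `c·I_Z + R·I_{¬Z}` is equivalent to comparing
them by the `¬Z`-conditioned value
`V_{¬Z}(R,π,h_t) = (Σ_{h_n} R(h_n) I_{¬Z}(h_n) μ(h_n|h_t,π)) / I_{¬Z}(h_t)`;
consequently a policy maximizes the former iff it maximizes the latter. -/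
theorem stmt4 {H Hn Pol : Type} [Fintype Hn]
    (μ : Hn → H → Pol → ℝ)
    (IZ : Hn → ℝ) (R : Hn → ℝ) (c : ℝ)
    (ht : H) (IZh : ℝ)
    (hunrig : ∀ π : Pol, ∑ hn, μ hn ht π * IZ hn = IZh)
    (hpos : 0 < 1 - IZh) :
    (∀ π π' : Pol,
      (∑ hn, μ hn ht π' * (c * IZ hn + R hn * (1 - IZ hn))) ≤
        (∑ hn, μ hn ht π * (c * IZ hn + R hn * (1 - IZ hn))) ↔
      (∑ hn, R hn * (1 - IZ hn) * μ hn ht π') / (1 - IZh) ≤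
        (∑ hn, R hn * (1 - IZ hn) * μ hn ht π) / (1 - IZh)) ∧
    (∀ πm : Pol,
      (∀ π : Pol,
        (∑ hn, μ hn ht π * (c * IZ hn + R hn * (1 - IZ hn))) ≤
          ∑ hn, μ hn ht πm * (c * IZ hn + R hn * (1 - IZ hn))) ↔
      (∀ π : Pol,
        (∑ hn, R hn * (1 - IZ hn) * μ hn ht π) / (1 - IZh) ≤
          (∑ hn, R hn * (1 - IZ hn) * μ hn ht πm) / (1 - IZh))) := by
  have value_eq : ∀ π, ∑ hn, μ hn ht π * (c * IZ hn + R hn * (1 - IZ hn)) =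
      c * IZh + ∑ hn, R hn * (1 - IZ hn) * μ hn ht π := fun π => by
    rw [Finset.sum_mul_const_mul_add_mul_one_sub, hunrig]
  exact ⟨le_iff_div_le_div_of_eq_const_add hpos value_eq,
    forall_le_iff_forall_div_le_div_of_eq_const_add hpos value_eq⟩
end

section
/- In the wristband-drink world model, the policy π_A maximizing expected reward R_a + R_d(X_w) gives a wristband to every attendee (a₀ = g regardless of o₀), and then gives a drink iff the attendee's state at time 1 is w or w_p. Its expected reward is 99/100, which strictly exceeds the expected reward 149/300 of the policy that gives wristbands only to mature-looking attendees then drinks to wristband wearers. -/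
/- The wristband-drink world model of Armstrong's indifference paper.
`Omega` is the hidden randomness: maturity `mat` (prob 1/2), whether looks
match maturity `e` (prob 2/3), human ID check `idc` (prob 1/100), and a fair
coin `coin` used when the drink action is `i`. Everything else is a
deterministic function of `Omega` and the policy. -/

namespace Wristband

inductive Act | g | ng | i
  deriving DecidableEq

instance instFintypeAct : Fintype Act := ⟨{Act.g, Act.ng, Act.i}, fun x => by cases x <;> simp⟩

inductive O1 | w | wp | nw | nwp
  deriving DecidableEq

instance instFintypeO1 : Fintype O1 := ⟨{O1.w, O1.wp, O1.nw, O1.nwp}, fun x => by cases x <;> simp⟩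

structure Omega where
  mat : Bool
  e : Bool
  idc : Bool
  coin : Bool
  deriving DecidableEq, Fintype

noncomputable def P (ω : Omega) : ℝ :=
  (1 / 2) * (if ω.e then 2 / 3 else 1 / 3) *
    (if ω.idc then 1 / 100 else 99 / 100) * (1 / 2)

def obs0 (ω : Omega) : Bool := if ω.e then ω.mat else !ω.mat

def step1 (ω : Omega) : Act → O1
  | Act.i => if ω.mat then O1.w else O1.nw
  | Act.g => if ω.mat then O1.w else if ω.idc then O1.nwp else O1.w
  | Act.ng => if ω.mat then (if ω.idc then O1.wp else O1.nw) else O1.nw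

def step2 (ω : Omega) : Act → Bool
  | Act.g => true
  | Act.ng => false
  | Act.i => ω.coin

structure Pol where
  act0 : Bool → Act
  act1 : Bool → Act → O1 → Act

structure Hist where
  o0 : Bool
  a0 : Act
  o1 : O1
  a1 : Act
  o2 : Bool
  deriving DecidableEq, Fintype

def trace (ω : Omega) (π : Pol) : Hist :=
  let o0 := obs0 ω
  let a0 := π.act0 o0
  let o1 := step1 ω a0
  let a1 := π.act1 o0 a0 o1
  ⟨o0, a0, o1, a1, step2 ω a1⟩

/-- Expected reward from the start under policy `π`. -/
noncomputable def ER (R : Hist → ℝ) (π : Pol) : ℝ := ∑ ω, P ω * R (trace ω π)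

def wrist : O1 → Bool
  | O1.w => true | O1.wp => true | _ => false

def pen : O1 → Bool
  | O1.wp => true | O1.nwp => true | _ => false

noncomputable def Ip (h : Hist) : ℝ := if pen h.o1 then 1 else 0
noncomputable def Ii (h : Hist) : ℝ := if h.a0 = Act.i then 1 else 0
noncomputable def Iw (h : Hist) : ℝ := if wrist h.o1 then 1 else 0
noncomputable def Idr (h : Hist) : ℝ := if h.o2 then 1 else 0

/-- `R_a = -I_p - I_i`. -/
noncomputable def Ra (h : Hist) : ℝ := -Ip h - Ii h
/-- `R_d(X_w) = I_d (2 I_w - 1)`. -/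
noncomputable def Rd (h : Hist) : ℝ := Idr h * (2 * Iw h - 1)

/-- Partial histories (prefixes): empty, after `o₀`, and after `o₀a₀o₁`. -/
inductive Pre
  | root
  | obs (o0 : Bool)
  | mid (o0 : Bool) (a0 : Act) (o1 : O1)

def extendB (h : Hist) : Pre → Bool
  | Pre.root => true
  | Pre.obs o0 => decide (h.o0 = o0)
  | Pre.mid o0 a0 o1 => decide (h.o0 = o0 ∧ h.a0 = a0 ∧ h.o1 = o1)

/-- Probability of the partial history `p` under `π`. -/
noncomputable def den (p : Pre) (π : Pol) : ℝ :=
  ∑ ω, if extendB (trace ω π) p then P ω else 0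

/-- Conditional expectation `E^π[I | p]` of an indicator/reward `I` given the
partial history `p`, under policy `π`. -/
noncomputable def cexp (I : Hist → ℝ) (p : Pre) (π : Pol) : ℝ :=
  (∑ ω, if extendB (trace ω π) p then P ω * I (trace ω π) else 0) / den p π

/-- Posterior probability that the attendee is mature given `(o₀, a₀, o₁)`. -/
noncomputable def postM (o0 : Bool) (a0 : Act) (o1 : O1) : ℝ :=
  (∑ ω, if obs0 ω = o0 ∧ step1 ω a0 = o1 ∧ ω.mat then P ω else 0) /
  (∑ ω, if obs0 ω = o0 ∧ step1 ω a0 = o1 then P ω else 0)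

/-- `I_{Y₀}`: posterior probability of mature AND human-ID-checked. -/
noncomputable def IY0m (o0 : Bool) (a0 : Act) (o1 : O1) : ℝ :=
  (∑ ω, if obs0 ω = o0 ∧ step1 ω a0 = o1 ∧ ω.mat ∧ ω.idc then P ω else 0) /
  (∑ ω, if obs0 ω = o0 ∧ step1 ω a0 = o1 then P ω else 0)

/-- `I_{Y₁}`: posterior probability of immature AND human-ID-checked. -/
noncomputable def IY1m (o0 : Bool) (a0 : Act) (o1 : O1) : ℝ :=
  (∑ ω, if obs0 ω = o0 ∧ step1 ω a0 = o1 ∧ ω.mat = false ∧ ω.idc then P ω else 0) /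
  (∑ ω, if obs0 ω = o0 ∧ step1 ω a0 = o1 then P ω else 0)

noncomputable def IY0 (h : Hist) : ℝ := IY0m h.o0 h.a0 h.o1
noncomputable def IY1 (h : Hist) : ℝ := IY1m h.o0 h.a0 h.o1

/-- The policy that gives everyone a wristband, then a drink iff wristband. -/
def giveAll : Pol := ⟨fun _ => Act.g, fun _ _ o1 => if wrist o1 then Act.g else Act.ng⟩

/-- The policy that gives a wristband iff the attendee looks mature (`o₀ = l_m`),
then a drink iff wristband. -/
def lookPol : Pol :=
  ⟨fun o0 => if o0 then Act.g else Act.ng,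
   fun _ _ o1 => if wrist o1 then Act.g else Act.ng⟩

/-
Since the drink is the last action and `o₁` already reveals whether the wristband is worn,
`R_d` is at most `I_w`, with equality exactly for "drink iff wristband". This turns the
two-step problem into a one-step one: choose `a₀` for each `o₀` to maximise
`I_w - I_p - I_i`. That quantity is `0` under `¬g`, at most `0` under `i`, and under `g`
it is `1` except with an immature, ID-checked attendee, whose weight is only `1/100`,
so `g` is best whatever `o₀` is.
-/

lemma Omega.sum_eq {M : Type*} [AddCommMonoid M] (F : Omega → M) :
    ∑ ω, F ω = ∑ m, ∑ e, ∑ c, ∑ k, F ⟨m, e, c, k⟩ := by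
  let toTuple : Omega ≃ Bool × Bool × Bool × Bool :=
    { toFun := fun ω => (ω.mat, ω.e, ω.idc, ω.coin)
      invFun := fun x => ⟨x.1, x.2.1, x.2.2.1, x.2.2.2⟩
      left_inv := fun _ => rfl
      right_inv := fun _ => rfl }
  rw [← toTuple.symm.sum_comp]
  simp only [Fintype.sum_prod_type]
  rfl

lemma P_nonneg (ω : Omega) : 0 ≤ P ω := by
  unfold P
  split_ifs <;> norm_num

lemma Rd_le_Iw (h : Hist) : Rd h ≤ Iw h := by
  unfold Rd Idr Iw
  split_ifs <;> norm_num

/-- The reward when the drink goes exactly to wristband wearers, the best second action. -/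
noncomputable def maxReward (ω : Omega) (a0 : Act) : ℝ :=
  (if wrist (step1 ω a0) then 1 else 0) - (if pen (step1 ω a0) then 1 else 0) -
    (if a0 = Act.i then 1 else 0)

lemma maxReward_g (ω : Omega) : maxReward ω Act.g = if !ω.mat && ω.idc then -1 else 1 := by
  rcases ω with ⟨_ | _, _, _ | _, _⟩ <;> simp [maxReward, step1, wrist, pen]

lemma maxReward_ng (ω : Omega) : maxReward ω Act.ng = 0 := by
  rcases ω with ⟨_ | _, _, _ | _, _⟩ <;> simp [maxReward, step1, wrist, pen]

lemma maxReward_i_nonpos (ω : Omega) : maxReward ω Act.i ≤ 0 := by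
  rcases ω with ⟨_ | _, _, _, _⟩ <;> simp [maxReward, step1, wrist, pen]

lemma Ra_add_Iw_trace (ω : Omega) (π : Pol) :
    Ra (trace ω π) + Iw (trace ω π) = maxReward ω (π.act0 (obs0 ω)) := by
  have ha0 : (trace ω π).a0 = π.act0 (obs0 ω) := rfl
  have ho1 : (trace ω π).o1 = step1 ω (π.act0 (obs0 ω)) := rfl
  simp only [Ra, Ip, Ii, Iw, maxReward, ha0, ho1]
  ring

lemma reward_le_maxReward (ω : Omega) (π : Pol) :
    Ra (trace ω π) + Rd (trace ω π) ≤ maxReward ω (π.act0 (obs0 ω)) := by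
  rw [← Ra_add_Iw_trace]
  exact add_le_add_right (Rd_le_Iw _) _

lemma reward_eq_maxReward (ω : Omega) (π : Pol)
    (hπ : ∀ o0 a0 o1, π.act1 o0 a0 o1 = if wrist o1 then Act.g else Act.ng) :
    Ra (trace ω π) + Rd (trace ω π) = maxReward ω (π.act0 (obs0 ω)) := by
  rw [← Ra_add_Iw_trace]
  congr 1
  simp only [Rd, Idr, Iw, trace, hπ]
  cases wrist (step1 ω (π.act0 (obs0 ω))) <;> norm_num [step2]

noncomputable def obsValue (o0 : Bool) (a0 : Act) : ℝ :=
  ∑ ω with obs0 ω = o0, P ω * maxReward ω a0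

lemma sum_maxReward_eq_obsValue (π : Pol) :
    ∑ ω, P ω * maxReward ω (π.act0 (obs0 ω)) =
      obsValue true (π.act0 true) + obsValue false (π.act0 false) := by
  rw [← Finset.sum_fiberwise Finset.univ obs0, Fintype.sum_bool, obsValue, obsValue]
  congr 1

lemma obsValue_ng (o0 : Bool) : obsValue o0 Act.ng = 0 := by
  simp only [obsValue, maxReward_ng, mul_zero, Finset.sum_const_zero]

lemma obsValue_g_true : obsValue true Act.g = 149 / 300 := by
  rw [obsValue, Finset.sum_filter, Omega.sum_eq]
  norm_num [maxReward_g, P, obs0]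

lemma obsValue_g_false : obsValue false Act.g = 148 / 300 := by
  rw [obsValue, Finset.sum_filter, Omega.sum_eq]
  norm_num [maxReward_g, P, obs0]

lemma obsValue_g_nonneg (o0 : Bool) : 0 ≤ obsValue o0 Act.g := by
  cases o0 <;> norm_num [obsValue_g_true, obsValue_g_false]

lemma obsValue_le_obsValue_g (o0 : Bool) (a0 : Act) : obsValue o0 a0 ≤ obsValue o0 Act.g := by
  cases a0 with
  | g => exact le_rfl
  | ng => exact (obsValue_ng o0).trans_le (obsValue_g_nonneg o0)
  | i =>
    refine le_trans (Finset.sum_nonpos fun ω _ => ?_) (obsValue_g_nonneg o0)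
    exact mul_nonpos_of_nonneg_of_nonpos (P_nonneg ω) (maxReward_i_nonpos ω)

lemma ER_le_obsValue (π : Pol) :
    ER (fun h => Ra h + Rd h) π ≤ obsValue true (π.act0 true) + obsValue false (π.act0 false) := by
  rw [← sum_maxReward_eq_obsValue]
  exact Finset.sum_le_sum fun ω _ =>
    mul_le_mul_of_nonneg_left (reward_le_maxReward ω π) (P_nonneg ω)

lemma ER_eq_obsValue (π : Pol)
    (hπ : ∀ o0 a0 o1, π.act1 o0 a0 o1 = if wrist o1 then Act.g else Act.ng) :
    ER (fun h => Ra h + Rd h) π = obsValue true (π.act0 true) + obsValue false (π.act0 false) := by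
  rw [← sum_maxReward_eq_obsValue]
  exact Finset.sum_congr rfl fun ω _ => congrArg (P ω * ·) (reward_eq_maxReward ω π hπ)

lemma ER_giveAll : ER (fun h => Ra h + Rd h) giveAll = 99 / 100 := by
  rw [ER_eq_obsValue giveAll fun _ _ _ => rfl]
  change obsValue true Act.g + obsValue false Act.g = _
  rw [obsValue_g_true, obsValue_g_false]
  norm_num

/-- The policy maximizing expected reward `R_a + R_d(X_w)` gives a
wristband to everyone and then a drink iff the attendee's state at time 1 is
`w` or `w_p`; its expected reward is `99/100`, strictly exceeding the expected
reward `149/300` of the policy giving wristbands only to mature-looking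
attendees and then drinks to wristband wearers. -/
theorem stmt8 :
    (∀ π : Pol, ER (fun h => Ra h + Rd h) π ≤ ER (fun h => Ra h + Rd h) giveAll) ∧
    ER (fun h => Ra h + Rd h) giveAll = 99 / 100 ∧
    ER (fun h => Ra h + Rd h) lookPol = 149 / 300 ∧
    (149 / 300 : ℝ) < 99 / 100 := by
  refine ⟨fun π => ?_, ER_giveAll, ?_, by norm_num⟩
  · calc ER (fun h => Ra h + Rd h) π
        ≤ obsValue true (π.act0 true) + obsValue false (π.act0 false) := ER_le_obsValue π
      _ ≤ obsValue true Act.g + obsValue false Act.g :=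
          add_le_add (obsValue_le_obsValue_g _ _) (obsValue_le_obsValue_g _ _)
      _ = ER (fun h => Ra h + Rd h) giveAll := (ER_eq_obsValue giveAll fun _ _ _ => rfl).symm
  · rw [ER_eq_obsValue lookPol fun _ _ _ => rfl]
    change obsValue true Act.g + obsValue false Act.ng = _
    rw [obsValue_g_true, obsValue_ng, add_zero]

end Wristband
end

section
/- In the wristband-drink world model, define the policy-counterfactual indicator I_Y(h) = μ(s₀ = m | h) (the posterior probability the attendee is mature, which equals the probability that the always-ID-check policy π₀ = (i,i) would result in a wristband). Then I_Y is unriggable, and the optimal policy for the reward R_a + R_d(Y) = −I_p − I_i + I_d·I_Y − I_d·(1−I_Y) gives a wristband at step 0 iff o₀ = l_m, and gives a drink at step 1 iff μ(s₀ = m | h₁) > 1/2. -/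
/- The wristband-drink world model of Armstrong's indifference paper.
`Omega` is the hidden randomness: maturity `mat` (prob 1/2), whether looks
match maturity `e` (prob 2/3), human ID check `idc` (prob 1/100), and a fair
coin `coin` used when the drink action is `i`. Everything else is a
deterministic function of `Omega` and the policy. -/

namespace Wristband

instance : Fintype Act := ⟨{Act.g, Act.ng, Act.i}, fun x => by cases x <;> simp⟩

instance : Fintype O1 := ⟨{O1.w, O1.wp, O1.nw, O1.nwp}, fun x => by cases x <;> simp⟩

/-- The policy-counterfactual indicator `I_Y(h) = μ(s₀ = m | h)`: the posterior
probability that the attendee is mature, which equals the probability that the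
always-ID-check policy `π₀ = (i,i)` would have resulted in a wristband. -/
noncomputable def IY (h : Hist) : ℝ := postM h.o0 h.a0 h.o1

/-- The compound reward `R_d(Y) = I_d·I_Y − I_d·(1 − I_Y) = I_d(2 I_Y − 1)`. -/
noncomputable def RdY (h : Hist) : ℝ := Idr h * (2 * IY h - 1)

/-- The policy giving a wristband iff `o₀ = l_m` and a drink iff
`μ(s₀ = m | h₁) > 1/2`. -/
noncomputable def polY : Pol :=
  ⟨fun o0 => if o0 then Act.g else Act.ng,
   fun o0 a0 o1 => if 1 / 2 < postM o0 a0 o1 then Act.g else Act.ng⟩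


/-! ### Auxiliary machinery for the proof -/

def eOm : Omega ≃ Bool × Bool × Bool × Bool where
  toFun ω := (ω.mat, ω.e, ω.idc, ω.coin)
  invFun p := ⟨p.1, p.2.1, p.2.2.1, p.2.2.2⟩
  left_inv := fun ⟨_,_,_,_⟩ => rfl
  right_inv := fun _ => rfl

lemma sum_omega (f : Omega → ℝ) :
    ∑ ω, f ω = ∑ m : Bool, ∑ e : Bool, ∑ i : Bool, ∑ c : Bool, f ⟨m, e, i, c⟩ := by
  rw [← Equiv.sum_comp eOm.symm f]
  simp [eOm, Fintype.sum_prod_type]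

lemma trace_o0 (π : Pol) (ω : Omega) : (trace ω π).o0 = obs0 ω := rfl

lemma IY_trace (π : Pol) (ω : Omega) :
    IY (trace ω π) =
      postM (obs0 ω) (π.act0 (obs0 ω)) (step1 ω (π.act0 (obs0 ω))) := rfl

lemma pm_false_g_nwp : postM false Act.g O1.nwp = 0 := by
  simp only [postM, sum_omega, Fintype.sum_bool]
  simp [P, obs0, step1]
  try norm_num

lemma pm_false_g_w : postM false Act.g O1.w = 50/149 := by
  simp only [postM, sum_omega, Fintype.sum_bool]
  simp [P, obs0, step1]
  try norm_num

lemma pm_false_i_nw : postM false Act.i O1.nw = 0 := by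
  simp only [postM, sum_omega, Fintype.sum_bool]
  simp [P, obs0, step1]
  try norm_num

lemma pm_false_i_w : postM false Act.i O1.w = 1 := by
  simp only [postM, sum_omega, Fintype.sum_bool]
  simp [P, obs0, step1]
  try norm_num

lemma pm_false_ng_nw : postM false Act.ng O1.nw = 99/299 := by
  simp only [postM, sum_omega, Fintype.sum_bool]
  simp [P, obs0, step1]
  try norm_num

lemma pm_false_ng_wp : postM false Act.ng O1.wp = 1 := by
  simp only [postM, sum_omega, Fintype.sum_bool]
  simp [P, obs0, step1]
  try norm_num

lemma pm_true_g_nwp : postM true Act.g O1.nwp = 0 := by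
  simp only [postM, sum_omega, Fintype.sum_bool]
  simp [P, obs0, step1]
  try norm_num

lemma pm_true_g_w : postM true Act.g O1.w = 200/299 := by
  simp only [postM, sum_omega, Fintype.sum_bool]
  simp [P, obs0, step1]
  try norm_num

lemma pm_true_i_nw : postM true Act.i O1.nw = 0 := by
  simp only [postM, sum_omega, Fintype.sum_bool]
  simp [P, obs0, step1]
  try norm_num

lemma pm_true_i_w : postM true Act.i O1.w = 1 := by
  simp only [postM, sum_omega, Fintype.sum_bool]
  simp [P, obs0, step1]
  try norm_num

lemma pm_true_ng_nw : postM true Act.ng O1.nw = 99/149 := by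
  simp only [postM, sum_omega, Fintype.sum_bool]
  simp [P, obs0, step1]
  try norm_num

lemma pm_true_ng_wp : postM true Act.ng O1.wp = 1 := by
  simp only [postM, sum_omega, Fintype.sum_bool]
  simp [P, obs0, step1]
  try norm_num


/-! #### Unriggability -/

noncomputable def StS (π : Pol) : ℝ :=
  ∑ ω, if obs0 ω then P ω * postM true (π.act0 true) (step1 ω (π.act0 true)) else 0

noncomputable def SfS (π : Pol) : ℝ :=
  ∑ ω, if obs0 ω then 0 else P ω * postM false (π.act0 false) (step1 ω (π.act0 false))

lemma StS_eq (π : Pol) : StS π = 1 / 3 := by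
  unfold StS
  rcases ha : π.act0 true with _ | _ | _ <;>
  · rw [sum_omega]
    simp only [Fintype.sum_bool]
    simp [P, obs0, step1, pm_false_g_nwp, pm_false_g_w, pm_false_i_nw, pm_false_i_w, pm_false_ng_nw, pm_false_ng_wp, pm_true_g_nwp, pm_true_g_w, pm_true_i_nw, pm_true_i_w, pm_true_ng_nw, pm_true_ng_wp]
    norm_num

lemma SfS_eq (π : Pol) : SfS π = 1 / 6 := by
  unfold SfS
  rcases ha : π.act0 false with _ | _ | _ <;>
  · rw [sum_omega]
    simp only [Fintype.sum_bool]
    simp [P, obs0, step1, pm_false_g_nwp, pm_false_g_w, pm_false_i_nw, pm_false_i_w, pm_false_ng_nw, pm_false_ng_wp, pm_true_g_nwp, pm_true_g_w, pm_true_i_nw, pm_true_i_w, pm_true_ng_nw, pm_true_ng_wp]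
    norm_num

lemma num_split (F : Omega → ℝ) :
    (∑ ω, F ω) =
      (∑ ω, if obs0 ω then F ω else 0) + (∑ ω, if obs0 ω then 0 else F ω) := by
  rw [← Finset.sum_add_distrib]
  exact Finset.sum_congr rfl fun ω _ => by cases h : obs0 ω <;> simp [h]

lemma cexp_root (π : Pol) : cexp IY Pre.root π = 1 / 2 := by
  have hden : den Pre.root π = 1 := by
    have he : ∀ ω, (if extendB (trace ω π) Pre.root then P ω else 0) = P ω :=
      fun ω => by simp [extendB]
    unfold den
    simp only [he]
    rw [sum_omega]
    simp only [Fintype.sum_bool]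
    norm_num [P]
  unfold cexp
  rw [hden, div_one]
  have h1 : (∑ ω, if extendB (trace ω π) Pre.root then P ω * IY (trace ω π) else 0)
      = ∑ ω, P ω * IY (trace ω π) :=
    Finset.sum_congr rfl fun ω _ => by simp [extendB]
  rw [h1, num_split (fun ω => P ω * IY (trace ω π))]
  have h2 : (∑ ω, if obs0 ω then P ω * IY (trace ω π) else 0) = StS π :=
    Finset.sum_congr rfl fun ω _ => by cases h : obs0 ω <;> simp [h, IY_trace, StS]
  have h3 : (∑ ω, if obs0 ω then 0 else P ω * IY (trace ω π)) = SfS π :=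
    Finset.sum_congr rfl fun ω _ => by cases h : obs0 ω <;> simp [h, IY_trace, SfS]
  rw [h2, h3, StS_eq, SfS_eq]
  norm_num

lemma cexp_obs (π : Pol) (b : Bool) :
    cexp IY (Pre.obs b) π = if b then 2 / 3 else 1 / 3 := by
  have hden : den (Pre.obs b) π = 1 / 2 := by
    have he : ∀ ω, (if extendB (trace ω π) (Pre.obs b) then P ω else 0)
        = (if obs0 ω = b then P ω else 0) :=
      fun ω => by by_cases hb : obs0 ω = b <;> simp [extendB, trace_o0, hb]
    unfold den
    simp only [he]
    cases b <;>
    · rw [sum_omega]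
      simp only [Fintype.sum_bool]
      simp [P, obs0]
      norm_num
  unfold cexp
  rw [hden]
  cases b with
  | false =>
      have h1 : (∑ ω, if extendB (trace ω π) (Pre.obs false) then P ω * IY (trace ω π) else 0)
          = SfS π :=
        Finset.sum_congr rfl fun ω _ => by
          cases h : obs0 ω <;> simp [extendB, trace_o0, h, IY_trace, SfS]
      rw [h1, SfS_eq]; norm_num
  | true =>
      have h1 : (∑ ω, if extendB (trace ω π) (Pre.obs true) then P ω * IY (trace ω π) else 0)
          = StS π :=
        Finset.sum_congr rfl fun ω _ => by
          cases h : obs0 ω <;> simp [extendB, trace_o0, h, IY_trace, StS]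
      rw [h1, StS_eq]; norm_num

lemma cexp_mid (π : Pol) (o0 : Bool) (a0 : Act) (o1 : O1)
    (h : 0 < den (Pre.mid o0 a0 o1) π) :
    cexp IY (Pre.mid o0 a0 o1) π = postM o0 a0 o1 := by
  unfold cexp
  have h1 : (∑ ω, if extendB (trace ω π) (Pre.mid o0 a0 o1) then P ω * IY (trace ω π) else 0)
      = ∑ ω, (if extendB (trace ω π) (Pre.mid o0 a0 o1) then P ω else 0) * postM o0 a0 o1 := by
    refine Finset.sum_congr rfl fun ω _ => ?_
    by_cases hx : extendB (trace ω π) (Pre.mid o0 a0 o1) = true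
    · obtain ⟨e1, e2, e3⟩ := of_decide_eq_true hx
      simp only [hx, if_true]
      rw [show IY (trace ω π) = postM (trace ω π).o0 (trace ω π).a0 (trace ω π).o1 from rfl,
        e1, e2, e3]
    · simp [hx]
  rw [h1, ← Finset.sum_mul]
  rw [show (∑ ω, if extendB (trace ω π) (Pre.mid o0 a0 o1) then P ω else 0)
      = den (Pre.mid o0 a0 o1) π from rfl]
  rw [mul_comm, mul_div_assoc, div_self (ne_of_gt h), mul_one]

/-! #### Optimality -/

noncomputable def phi (ω : Omega) (a : Act) : ℝ :=
  P ω * (-(if pen (step1 ω a) then (1:ℝ) else 0) - (if a = Act.i then (1:ℝ) else 0))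
    + max 0 (P ω * (2 * postM (obs0 ω) a (step1 ω a) - 1))

lemma Ra_trace (π : Pol) (ω : Omega) :
    Ra (trace ω π) = -(if pen (step1 ω (π.act0 (obs0 ω))) then (1:ℝ) else 0)
      - (if π.act0 (obs0 ω) = Act.i then (1:ℝ) else 0) := rfl

lemma RdY_trace (π : Pol) (ω : Omega) :
    RdY (trace ω π) = (if (trace ω π).o2 then (1:ℝ) else 0) *
      (2 * postM (obs0 ω) (π.act0 (obs0 ω)) (step1 ω (π.act0 (obs0 ω))) - 1) := rfl

lemma step_bound (π : Pol) (ω : Omega) :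
    P ω * (Ra (trace ω π) + RdY (trace ω π)) ≤ phi ω (π.act0 (obs0 ω)) := by
  have hP := P_nonneg ω
  rw [Ra_trace, RdY_trace]
  unfold phi
  rw [mul_add]
  refine add_le_add le_rfl ?_
  set X := 2 * postM (obs0 ω) (π.act0 (obs0 ω)) (step1 ω (π.act0 (obs0 ω))) - 1 with hX
  cases h : (trace ω π).o2
  · simp only [h, Bool.false_eq_true, if_false, zero_mul, mul_zero]
    exact le_max_left _ _
  · simp only [h, if_true, one_mul]
    exact le_max_right _ _

lemma step_eq (ω : Omega) :
    P ω * (Ra (trace ω polY) + RdY (trace ω polY)) = phi ω (polY.act0 (obs0 ω)) := by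
  have hP := P_nonneg ω
  rw [Ra_trace, RdY_trace]
  unfold phi
  rw [mul_add]
  congr 1
  set X := 2 * postM (obs0 ω) (polY.act0 (obs0 ω)) (step1 ω (polY.act0 (obs0 ω))) - 1 with hX
  have ho2 : (trace ω polY).o2
      = (if 1 / 2 < postM (obs0 ω) (polY.act0 (obs0 ω)) (step1 ω (polY.act0 (obs0 ω)))
          then true else false) := by
    show step2 ω (polY.act1 (obs0 ω) (polY.act0 (obs0 ω)) (step1 ω (polY.act0 (obs0 ω)))) = _
    rw [show polY.act1 (obs0 ω) (polY.act0 (obs0 ω)) (step1 ω (polY.act0 (obs0 ω)))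
        = (if 1 / 2 < postM (obs0 ω) (polY.act0 (obs0 ω)) (step1 ω (polY.act0 (obs0 ω)))
            then Act.g else Act.ng) from rfl]
    rw [apply_ite (step2 ω)]
    rfl
  by_cases hc : 1 / 2 < postM (obs0 ω) (polY.act0 (obs0 ω)) (step1 ω (polY.act0 (obs0 ω)))
  · rw [ho2, if_pos hc]
    simp only [if_true, one_mul]
    rw [max_eq_right (mul_nonneg hP (by rw [hX]; linarith))]
  · rw [ho2, if_neg hc]
    simp only [Bool.false_eq_true, if_false, zero_mul, mul_zero]
    have hx : P ω * X ≤ 0 :=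
      mul_nonpos_iff.mpr (Or.inl ⟨hP, by rw [hX]; have := not_lt.mp hc; linarith⟩)
    rw [max_eq_left hx]

noncomputable def Tt (a : Act) : ℝ := ∑ ω, if obs0 ω then phi ω a else 0
noncomputable def Ff (a : Act) : ℝ := ∑ ω, if obs0 ω then 0 else phi ω a

lemma phi_split (f : Bool → Act) :
    (∑ ω, phi ω (f (obs0 ω))) = Tt (f true) + Ff (f false) := by
  unfold Tt Ff
  rw [← Finset.sum_add_distrib]
  exact Finset.sum_congr rfl fun ω _ => by cases h : obs0 ω <;> simp [h]

set_option maxHeartbeats 2000000 in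
lemma Tt_le (a : Act) : Tt a ≤ Tt Act.g := by
  have hval : ∀ a : Act, Tt a = if a = Act.g then 1/6 else if a = Act.ng then 49/300 else -(1/6) := by
    intro a
    unfold Tt phi
    cases a <;>
    · rw [sum_omega]
      simp only [Fintype.sum_bool]
      simp [P, obs0, step1, pen, pm_false_g_nwp, pm_false_g_w, pm_false_i_nw, pm_false_i_w, pm_false_ng_nw, pm_false_ng_wp, pm_true_g_nwp, pm_true_g_w, pm_true_i_nw, pm_true_i_w, pm_true_ng_nw, pm_true_ng_wp]
      norm_num [max_def]
  rw [hval, hval]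
  cases a <;> simp <;> try norm_num

set_option maxHeartbeats 2000000 in
lemma Ff_le (a : Act) : Ff a ≤ Ff Act.ng := by
  have hval : ∀ a : Act, Ff a = if a = Act.g then -(1/300) else if a = Act.ng then 0 else -(1/3) := by
    intro a
    unfold Ff phi
    cases a <;>
    · rw [sum_omega]
      simp only [Fintype.sum_bool]
      simp [P, obs0, step1, pen, pm_false_g_nwp, pm_false_g_w, pm_false_i_nw, pm_false_i_w, pm_false_ng_nw, pm_false_ng_wp, pm_true_g_nwp, pm_true_g_w, pm_true_i_nw, pm_true_i_w, pm_true_ng_nw, pm_true_ng_wp]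
      norm_num [max_def]
  rw [hval, hval]
  cases a <;> simp <;> try norm_num

lemma ER_le_phi (π : Pol) :
    ER (fun h => Ra h + RdY h) π ≤ Tt (π.act0 true) + Ff (π.act0 false) := by
  rw [← phi_split π.act0]
  exact Finset.sum_le_sum fun ω _ => step_bound π ω

lemma ER_polY_eq : ER (fun h => Ra h + RdY h) polY = Tt Act.g + Ff Act.ng := by
  have h1 : ER (fun h => Ra h + RdY h) polY = ∑ ω, phi ω (polY.act0 (obs0 ω)) :=
    Finset.sum_congr rfl fun ω _ => step_eq ω
  rw [h1, phi_split polY.act0]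
  rfl


/-- `I_Y` is unriggable (its conditional expectation on any
partial history is policy-independent), and `polY` is optimal for the reward
`R_a + R_d(Y) = -I_p - I_i + I_d·I_Y - I_d·(1 - I_Y)`. -/
theorem stmt10 :
    (∀ (p : Pre) (π π' : Pol), 0 < den p π → 0 < den p π' →
      cexp IY p π = cexp IY p π') ∧
    (∀ π : Pol,
      ER (fun h => Ra h + RdY h) π ≤ ER (fun h => Ra h + RdY h) polY) := by
  constructor
  · intro p π π' h h'
    cases p with
    | root => rw [cexp_root, cexp_root]
    | obs b => rw [cexp_obs, cexp_obs]
    | mid o0 a0 o1 => rw [cexp_mid π o0 a0 o1 h, cexp_mid π' o0 a0 o1 h']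
  · intro π
    calc ER (fun h => Ra h + RdY h) π ≤ Tt (π.act0 true) + Ff (π.act0 false) := ER_le_phi π
    _ ≤ Tt Act.g + Ff Act.ng := add_le_add (Tt_le _) (Ff_le _)
    _ = ER (fun h => Ra h + RdY h) polY := ER_polY_eq.symm

end Wristband
end
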